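/- Let g ≥ 2 and d be integers. There exists a d-special stable vine curve of genus g if and only if gcd(d − g + 1, 2g − 2) > 1. -/

import Mathlib

/-- `(g₁, g₂, k)` encodes a stable vine curve of genus `g`: two smooth irreducible
components of genera `g₁, g₂` meeting in `k` nodes. -/
def StableVine (g g₁ g₂ k : ℤ) : Prop :=
  0 ≤ g₁ ∧ 0 ≤ g₂ ∧ 1 ≤ k ∧ g = g₁ + g₂ + k - 1 ∧ ((g₁ = 0 ∨ g₂ = 0) → 3 ≤ k)

/-- The Basic Inequality for a component of `ω`-degree `w`, with `k` nodes, on a curve of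
genus `g`, for total degree `d` and partial degree `e`. -/
def BasicIneq (g d k w e : ℤ) : Prop :=
  (d : ℚ) * w / (2 * g - 2) - k / 2 ≤ e ∧ (e : ℚ) ≤ (d : ℚ) * w / (2 * g - 2) + k / 2

/-- The strict version of the Basic Inequality. -/
def BasicIneqStrict (g d k w e : ℤ) : Prop :=
  (d : ℚ) * w / (2 * g - 2) - k / 2 < e ∧ (e : ℚ) < (d : ℚ) * w / (2 * g - 2) + k / 2

/-- `(e₁, e₂)` is a balanced multidegree of total degree `d` on the vine curve `(g₁, g₂, k)`. -/
def IsBalanced (g d g₁ g₂ k e₁ e₂ : ℤ) : Prop :=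
  e₁ + e₂ = d ∧ BasicIneq g d k (2 * g₁ - 2 + k) e₁ ∧ BasicIneq g d k (2 * g₂ - 2 + k) e₂

/-- `(e₁, e₂)` is a stably balanced multidegree of total degree `d` on `(g₁, g₂, k)`. -/
def IsStablyBalanced (g d g₁ g₂ k e₁ e₂ : ℤ) : Prop :=
  e₁ + e₂ = d ∧ BasicIneqStrict g d k (2 * g₁ - 2 + k) e₁ ∧
    BasicIneqStrict g d k (2 * g₂ - 2 + k) e₂

/-- The vine curve `(g₁, g₂, k)` is `d`-special: it admits a balanced multidegree of total
degree `d` which is not stably balanced. -/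
def DSpecial (g d g₁ g₂ k : ℤ) : Prop :=
  ∃ e₁ e₂ : ℤ, IsBalanced g d g₁ g₂ k e₁ e₂ ∧ ¬ IsStablyBalanced g d g₁ g₂ k e₁ e₂

/-!
Write `m = 2g - 2` and `w = 2a - 2 + k` for the `ω`-degree of a component of genus `a`. Since
`(g - 1) w / m = w / 2`, the bounds `d w / m ± k / 2` of the Basic Inequality differ from
`(d - g + 1) w / m` by integers, so a balanced multidegree can sit on the boundary exactly when
`m ∣ (d - g + 1) w`. The `ω`-degrees of components of stable vine curves of genus `g` are exactly
the integers `0 < w < m`, and such a `w` with `m ∣ (d - g + 1) w` exists iff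
`gcd (d - g + 1, m) > 1` (take `w = m / gcd`).
-/

theorem Int.one_lt_gcd_iff_exists_dvd_mul {n m : ℤ} (hm : 0 < m) :
    1 < Int.gcd n m ↔ ∃ w, 0 < w ∧ w < m ∧ m ∣ n * w := by
  constructor
  · intro h
    set G : ℤ := (Int.gcd n m : ℤ)
    have hG : 2 ≤ G := by simp only [G]; omega
    obtain ⟨a, ha⟩ : G ∣ n := Int.gcd_dvd_left n m
    obtain ⟨b, hb⟩ : G ∣ m := Int.gcd_dvd_right n m
    exact ⟨b, by nlinarith, by nlinarith, a, by linear_combination b * ha - a * hb⟩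
  · rintro ⟨w, hw₀, hwm, hdvd⟩
    by_contra! hle
    have hcop : IsCoprime n m := Int.isCoprime_iff_gcd_eq_one.mpr <| by
      have : Int.gcd n m ≠ 0 := by simp [Int.gcd_eq_zero_iff, hm.ne']
      omega
    exact absurd (Int.le_of_dvd hw₀ (hcop.symm.dvd_of_dvd_mul_left hdvd)) (by omega)

namespace StableVine

variable {g g₁ g₂ k : ℤ}

theorem two_le_genus (hv : StableVine g g₁ g₂ k) : 2 ≤ g := by
  obtain ⟨_, _, _, _, _⟩ := hv
  omega

theorem omega_pos (hv : StableVine g g₁ g₂ k) : 0 < 2 * g₁ - 2 + k := by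
  obtain ⟨_, _, _, _, _⟩ := hv
  omega

theorem omega_lt (hv : StableVine g g₁ g₂ k) : 2 * g₁ - 2 + k < 2 * g - 2 := by
  obtain ⟨_, _, _, _, _⟩ := hv
  omega

end StableVine

/-- One or two nodes suffice, according to the parity of `w`. -/
theorem exists_stableVine_omega_eq {g w : ℤ} (hw₀ : 0 < w) (hwg : w < 2 * g - 2) :
    ∃ g₁ g₂ k, StableVine g g₁ g₂ k ∧ 2 * g₁ - 2 + k = w := by
  rcases Int.even_or_odd w with ⟨c, rfl⟩ | ⟨c, rfl⟩
  · exact ⟨c, g - 1 - c, 2, ⟨by omega, by omega, by omega, by omega, by omega⟩, by ring⟩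
  · exact ⟨c + 1, g - c - 1, 1, ⟨by omega, by omega, by omega, by omega, by omega⟩, by ring⟩

section BasicIneq

variable {g d k w e : ℤ}

theorem BasicIneq.eq_or_eq_of_not_strict (h : BasicIneq g d k w e)
    (hs : ¬ BasicIneqStrict g d k w e) :
    (e : ℚ) = d * w / (2 * g - 2) - k / 2 ∨ (e : ℚ) = d * w / (2 * g - 2) + k / 2 := by
  obtain ⟨hlo, hhi⟩ := h
  by_contra! hne
  exact hs ⟨lt_of_le_of_ne hlo hne.1.symm, lt_of_le_of_ne hhi hne.2⟩

theorem basicIneq_of_eq_add (hk : 0 ≤ k) (h : (e : ℚ) = d * w / (2 * g - 2) + k / 2) :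
    BasicIneq g d k w e := by
  have : (0 : ℚ) ≤ k := by exact_mod_cast hk
  exact ⟨by linarith, h.le⟩

theorem basicIneq_of_eq_sub (hk : 0 ≤ k) (h : (e : ℚ) = d * w / (2 * g - 2) - k / 2) :
    BasicIneq g d k w e := by
  have : (0 : ℚ) ≤ k := by exact_mod_cast hk
  exact ⟨h.ge, by linarith⟩

theorem not_basicIneqStrict_of_eq_add (h : (e : ℚ) = d * w / (2 * g - 2) + k / 2) :
    ¬ BasicIneqStrict g d k w e :=
  fun hs => hs.2.ne h

end BasicIneq

section Boundary

variable {g d a k e : ℤ}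

theorem two_mul_sub_two_ne_zero (hg : g ≠ 1) : (2 * g - 2 : ℚ) ≠ 0 := by
  have : (g : ℚ) ≠ 1 := by exact_mod_cast hg
  contrapose! this
  linarith

theorem dvd_of_eq_bound (hg : g ≠ 1)
    (h : (e : ℚ) = d * (2 * a - 2 + k : ℤ) / (2 * g - 2) - k / 2 ∨
      (e : ℚ) = d * (2 * a - 2 + k : ℤ) / (2 * g - 2) + k / 2) :
    2 * g - 2 ∣ (d - g + 1) * (2 * a - 2 + k) := by
  have hm := two_mul_sub_two_ne_zero hg
  rcases h with h | h
  · have h' := (div_eq_iff hm).mp (sub_eq_iff_eq_add.mp h.symm)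
    refine ⟨e - a + 1, ?_⟩
    push_cast at h'
    exact_mod_cast (by linear_combination h' :
      ((d - g + 1) * (2 * a - 2 + k) : ℚ) = (2 * g - 2) * (e - a + 1))
  · have h' := (div_eq_iff hm).mp (eq_sub_of_add_eq h.symm)
    refine ⟨e - a + 1 - k, ?_⟩
    push_cast at h'
    exact_mod_cast (by linear_combination h' :
      ((d - g + 1) * (2 * a - 2 + k) : ℚ) = (2 * g - 2) * (e - a + 1 - k))

theorem eq_add_of_mul_eq {t : ℤ} (hg : g ≠ 1)
    (h : (d - g + 1) * (2 * a - 2 + k) = (2 * g - 2) * t) :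
    ((t + a - 1 + k : ℤ) : ℚ) = d * (2 * a - 2 + k : ℤ) / (2 * g - 2) + k / 2 := by
  have hq : ((d - g + 1) * (2 * a - 2 + k) : ℚ) = (2 * g - 2) * t := by exact_mod_cast h
  have : (d : ℚ) * (2 * a - 2 + k : ℤ) / (2 * g - 2) = t + a - 1 + k / 2 := by
    rw [div_eq_iff (two_mul_sub_two_ne_zero hg)]
    push_cast
    linear_combination hq
  push_cast at this ⊢
  linarith

end Boundary

theorem div_add_div_omega_eq {g d g₁ g₂ k : ℤ} (hg : g ≠ 1) (hgsum : g = g₁ + g₂ + k - 1) :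
    (d : ℚ) * (2 * g₁ - 2 + k : ℤ) / (2 * g - 2) + d * (2 * g₂ - 2 + k : ℤ) / (2 * g - 2) =
      d := by
  have hq : (g : ℚ) = g₁ + g₂ + k - 1 := by exact_mod_cast hgsum
  rw [← add_div, div_eq_iff (two_mul_sub_two_ne_zero hg)]
  push_cast
  linear_combination (-2 * d : ℚ) * hq

/-- By `div_add_div_omega_eq`, the upper bound of one component and the lower bound of the
other add up to `d`, so the bounds of the two components are integral together. -/
theorem dSpecial_iff_dvd {g d g₁ g₂ k : ℤ} (hv : StableVine g g₁ g₂ k) :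
    DSpecial g d g₁ g₂ k ↔ 2 * g - 2 ∣ (d - g + 1) * (2 * g₁ - 2 + k) := by
  have hg : g ≠ 1 := by have := hv.two_le_genus; omega
  obtain ⟨-, -, hk, hgsum, -⟩ := hv
  constructor
  · rintro ⟨e₁, e₂, ⟨hsum, hb₁, hb₂⟩, hns⟩
    by_cases hs₁ : BasicIneqStrict g d k (2 * g₁ - 2 + k) e₁
    · have hs₂ : ¬ BasicIneqStrict g d k (2 * g₂ - 2 + k) e₂ :=
        fun hs₂ => hns ⟨hsum, hs₁, hs₂⟩
      have hdvd₂ := dvd_of_eq_bound hg (hb₂.eq_or_eq_of_not_strict hs₂)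
      have : (d - g + 1) * (2 * g₁ - 2 + k) =
          (d - g + 1) * (2 * g - 2) - (d - g + 1) * (2 * g₂ - 2 + k) := by
        linear_combination (-2 * (d - g + 1)) * hgsum
      rw [this]
      exact dvd_sub (dvd_mul_left _ _) hdvd₂
    · exact dvd_of_eq_bound hg (hb₁.eq_or_eq_of_not_strict hs₁)
  · rintro ⟨t, ht⟩
    have he₁ := eq_add_of_mul_eq hg ht
    have he₂ : ((d - (t + g₁ - 1 + k) : ℤ) : ℚ) =
        d * (2 * g₂ - 2 + k : ℤ) / (2 * g - 2) - k / 2 := by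
      have := div_add_div_omega_eq (d := d) hg hgsum
      push_cast at this he₁ ⊢
      linarith
    exact ⟨_, _,
      ⟨by ring, basicIneq_of_eq_add (by omega) he₁, basicIneq_of_eq_sub (by omega) he₂⟩,
      fun hs => not_basicIneqStrict_of_eq_add he₁ hs.2.1⟩

/-- There exists a `d`-special stable vine curve of genus `g` iff
`gcd (d - g + 1) (2g - 2) > 1`. -/
theorem stmt_4 (g d : ℤ) (hg : 2 ≤ g) :
    (∃ g₁ g₂ k : ℤ, StableVine g g₁ g₂ k ∧ DSpecial g d g₁ g₂ k) ↔
      1 < Int.gcd (d - g + 1) (2 * g - 2) := by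
  rw [Int.one_lt_gcd_iff_exists_dvd_mul (by omega : (0 : ℤ) < 2 * g - 2)]
  constructor
  · rintro ⟨g₁, g₂, k, hv, hd⟩
    exact ⟨_, hv.omega_pos, hv.omega_lt, (dSpecial_iff_dvd hv).mp hd⟩
  · rintro ⟨w, hw₀, hwg, hdvd⟩
    obtain ⟨g₁, g₂, k, hv, rfl⟩ := exists_stableVine_omega_eq hw₀ hwg
    exact ⟨g₁, g₂, k, hv, (dSpecial_iff_dvd hv).mpr hdvd⟩
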